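/- arXiv:2004.07494 — 3 statements merged into one kernel-verified Lean document; each statement's English description precedes it below -/
import Mathlib

section
/- Let T1, T2, T3, T4 be bounded linear operators on H each admitting an A-adjoint (i.e. for each i there exists S_i with A∘S_i = T_i*∘A). Then w_B([[T1,0],[0,T4]]) ≤ w_B([[T1,T2],[T3,T4]]). -/
open scoped InnerProductSpace
open ContinuousLinearMap

variable {H : Type*} [NormedAddCommGroup H] [InnerProductSpace ℂ H] [CompleteSpace H]

/-- The `A`-seminorm `‖x‖_A = √⟨Ax,x⟩`. -/
noncomputable def aNorm (A : H →L[ℂ] H) (x : H) : ℝ :=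
  Real.sqrt (⟪A x, x⟫_ℂ).re

/-- The `A`-numerical radius `w_A(T) = sup {|⟨ATx,x⟩| : x ∈ H, ‖x‖_A = 1}`. -/
noncomputable def wA (A T : H →L[ℂ] H) : ℝ :=
  sSup {r : ℝ | ∃ x : H, aNorm A x = 1 ∧ r = ‖⟪A (T x), x⟫_ℂ‖}

/-- The `A`-operator seminorm `‖T‖_A = sup {‖Tx‖_A : x ∈ closure (range A), ‖x‖_A = 1}`. -/
noncomputable def aOpNorm (A T : H →L[ℂ] H) : ℝ :=
  sSup {r : ℝ | ∃ x : H, x ∈ closure (Set.range (⇑A)) ∧ aNorm A x = 1 ∧ r = aNorm A (T x)}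

/-- The `B`-numerical radius of the operator matrix `[[T1,T2],[T3,T4]]` acting on `H ⊕ H` by
`(x, y) ↦ (T1 x + T2 y, T3 x + T4 y)`, where `B = [[A,0],[0,A]]`:
`w_B(T) = sup {|⟨BTz,z⟩| : z ∈ H ⊕ H, ‖z‖_B = 1}`. -/
noncomputable def wB (A T1 T2 T3 T4 : H →L[ℂ] H) : ℝ :=
  sSup {r : ℝ | ∃ x y : H, Real.sqrt ((⟪A x, x⟫_ℂ).re + (⟪A y, y⟫_ℂ).re) = 1 ∧
    r = ‖⟪A (T1 x + T2 y), x⟫_ℂ + ⟪A (T3 x + T4 y), y⟫_ℂ‖}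

/-!
Writing `z = (x, y)`, the diagonal form `⟨B diag(T1,T4) z, z⟩` is the average of the full form
`⟨B T z, z⟩` at `(x, y)` and at `(x, -y)`, so it is bounded by `w_B(T)`, provided the set defining
`w_B(T)` is bounded above (otherwise its `sSup` is `0`). Boundedness comes from the `A`-adjoints:
if `A S = T* A` then `S T` is `A`-selfadjoint, and an `A`-selfadjoint `N` satisfies
`‖N x‖_A ≤ ‖N‖ ‖x‖_A`, by iterating the Cauchy–Schwarz bound `‖N x‖_A² ≤ ‖x‖_A ‖N² x‖_A` along
the powers `N ^ 2 ^ n`. Hence `‖T x‖_A ≤ √‖S T‖ ‖x‖_A`.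
-/

lemma pow_two_pow_le_of_sq_le_succ {r : ℕ → ℝ} (hr : ∀ n, 0 ≤ r n)
    (h : ∀ n, r n ^ 2 ≤ r (n + 1)) (n : ℕ) : r 0 ^ 2 ^ n ≤ r n := by
  induction n with
  | zero => simp
  | succ n ih =>
    calc r 0 ^ 2 ^ (n + 1) = (r 0 ^ 2 ^ n) ^ 2 := by rw [pow_succ, pow_mul]
      _ ≤ r n ^ 2 := pow_le_pow_left₀ (pow_nonneg (hr 0) _) ih 2
      _ ≤ r (n + 1) := h n

lemma le_of_forall_pow_two_pow_le_mul {a b D : ℝ} (hb : 0 ≤ b)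
    (h : ∀ n : ℕ, a ^ 2 ^ n ≤ D * b ^ 2 ^ n) : a ≤ b := by
  rcases hb.eq_or_lt with rfl | hb
  · simpa using h 0
  by_contra! hab
  have hq : 1 < a / b := (one_lt_div hb).2 hab
  obtain ⟨n, hn⟩ := pow_unbounded_of_one_lt D hq
  have hD : (a / b) ^ 2 ^ n ≤ D := by
    rw [div_pow, div_le_iff₀ (by positivity)]
    exact h n
  have hmono : (a / b) ^ n ≤ (a / b) ^ 2 ^ n := pow_le_pow_right₀ hq.le Nat.lt_two_pow_self.le
  linarith

lemma aNorm_nonneg (A : H →L[ℂ] H) (x : H) : 0 ≤ aNorm A x := Real.sqrt_nonneg _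

section ASeminorm

variable {A : H →L[ℂ] H}

lemma inner_apply_eq_inner_sqrt (hA : A.IsPositive) (x y : H) :
    ⟪A x, y⟫_ℂ = ⟪CFC.sqrt A x, CFC.sqrt A y⟫_ℂ := by
  have hsqrt : IsSelfAdjoint (CFC.sqrt A) := IsSelfAdjoint.of_nonneg (CFC.sqrt_nonneg A)
  conv_lhs => rw [← CFC.sqrt_mul_sqrt_self A ((nonneg_iff_isPositive A).2 hA)]
  exact hsqrt.isSymmetric _ _

lemma aNorm_eq_norm_sqrt (hA : A.IsPositive) (x : H) : aNorm A x = ‖CFC.sqrt A x‖ := by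
  rw [aNorm, inner_apply_eq_inner_sqrt hA, inner_self_eq_norm_sq_to_K]
  norm_cast
  exact Real.sqrt_sq (norm_nonneg _)

lemma re_inner_self_eq_aNorm_sq (hA : A.IsPositive) (x : H) :
    (⟪A x, x⟫_ℂ).re = aNorm A x ^ 2 :=
  (Real.sq_sqrt (hA.re_inner_nonneg_left x)).symm

lemma norm_inner_le_aNorm_mul_aNorm (hA : A.IsPositive) (x y : H) :
    ‖⟪A x, y⟫_ℂ‖ ≤ aNorm A x * aNorm A y := by
  rw [inner_apply_eq_inner_sqrt hA, aNorm_eq_norm_sqrt hA, aNorm_eq_norm_sqrt hA]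
  exact norm_inner_le_norm _ _

end ASeminorm

/-- `N` is `A`-selfadjoint: `A N = N* A`. -/
def IsASelfAdjoint (A N : H →L[ℂ] H) : Prop :=
  ∀ x y : H, ⟪A (N x), y⟫_ℂ = ⟪A x, N y⟫_ℂ

namespace IsASelfAdjoint

variable {A N : H →L[ℂ] H}

lemma pow (hN : IsASelfAdjoint A N) (k : ℕ) : IsASelfAdjoint A (N ^ k) := by
  induction k with
  | zero => simp [IsASelfAdjoint]
  | succ k ih =>
    intro x y
    rw [pow_succ, mul_apply_eq_comp, ih, hN, ← mul_apply_eq_comp, pow_mul_comm']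

lemma aNorm_apply_sq_le (hA : A.IsPositive) (hN : IsASelfAdjoint A N) (x : H) :
    aNorm A (N x) ^ 2 ≤ aNorm A x * aNorm A (N (N x)) := by
  rw [← re_inner_self_eq_aNorm_sq hA, hN]
  exact (Complex.re_le_norm _).trans (norm_inner_le_aNorm_mul_aNorm hA _ _)

lemma aNorm_apply_le (hA : A.IsPositive) (hN : IsASelfAdjoint A N) (x : H) :
    aNorm A (N x) ≤ ‖N‖ * aNorm A x := by
  rcases (aNorm_nonneg A x).eq_or_lt with hx | hx
  · have hsq := hN.aNorm_apply_sq_le hA x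
    rw [← hx, zero_mul] at hsq
    rw [← hx, mul_zero]
    nlinarith [aNorm_nonneg A (N x)]
  set r : ℕ → ℝ := fun n => aNorm A ((N ^ 2 ^ n) x) / aNorm A x with hr
  have hr_nonneg : ∀ n, 0 ≤ r n := fun n => div_nonneg (aNorm_nonneg A _) hx.le
  have hr_step : ∀ n, r n ^ 2 ≤ r (n + 1) := by
    intro n
    have h := (hN.pow (2 ^ n)).aNorm_apply_sq_le hA x
    rw [← mul_apply_eq_comp, ← pow_add, ← two_mul, ← pow_succ'] at h
    rw [hr, div_pow, div_le_div_iff₀ (by positivity) hx]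
    nlinarith
  have hr_bound : ∀ n, r n ≤ ‖CFC.sqrt A‖ * ‖x‖ / aNorm A x * ‖N‖ ^ 2 ^ n := by
    intro n
    rw [hr, div_mul_eq_mul_div, div_le_div_iff_of_pos_right hx, aNorm_eq_norm_sqrt hA]
    calc ‖CFC.sqrt A ((N ^ 2 ^ n) x)‖ ≤ ‖CFC.sqrt A‖ * (‖N ^ 2 ^ n‖ * ‖x‖) :=
          (le_opNorm _ _).trans (by gcongr; exact le_opNorm _ _)
      _ ≤ ‖CFC.sqrt A‖ * (‖N‖ ^ 2 ^ n * ‖x‖) := by gcongr; exact norm_pow_le' N (by positivity)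
      _ = _ := by ring
  have h0 : r 0 ≤ ‖N‖ := le_of_forall_pow_two_pow_le_mul (norm_nonneg N) fun n =>
    (pow_two_pow_le_of_sq_le_succ hr_nonneg hr_step n).trans (hr_bound n)
  simpa [hr, div_le_iff₀ hx] using h0

end IsASelfAdjoint

section AAdjoint

variable {A S T : H →L[ℂ] H}

lemma inner_apply_eq_inner_of_aAdjoint (hA : A.IsPositive) (hS : A ∘L S = adjoint T ∘L A)
    (u v : H) : ⟪A (T u), v⟫_ℂ = ⟪A u, S v⟫_ℂ := by
  rw [hA.inner_left_eq_inner_right, ← adjoint_inner_right, ← comp_apply, ← hS, comp_apply,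
    hA.inner_left_eq_inner_right]

lemma inner_aAdjoint_apply_eq_inner (hS : A ∘L S = adjoint T ∘L A) (u v : H) :
    ⟪A (S u), v⟫_ℂ = ⟪A u, T v⟫_ℂ := by
  rw [← comp_apply, hS, comp_apply, adjoint_inner_left]

lemma isASelfAdjoint_aAdjoint_comp (hA : A.IsPositive) (hS : A ∘L S = adjoint T ∘L A) :
    IsASelfAdjoint A (S ∘L T) := fun u v => by
  rw [comp_apply, comp_apply, inner_aAdjoint_apply_eq_inner hS,
    inner_apply_eq_inner_of_aAdjoint hA hS]

lemma aNorm_apply_le_of_aAdjoint (hA : A.IsPositive) (hS : A ∘L S = adjoint T ∘L A) (x : H) :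
    aNorm A (T x) ≤ √‖S ∘L T‖ * aNorm A x := by
  have hsq : aNorm A (T x) ^ 2 ≤ ‖S ∘L T‖ * aNorm A x ^ 2 :=
    calc aNorm A (T x) ^ 2 = (⟪A x, (S ∘L T) x⟫_ℂ).re := by
          rw [← re_inner_self_eq_aNorm_sq hA, inner_apply_eq_inner_of_aAdjoint hA hS, comp_apply]
      _ ≤ aNorm A x * aNorm A ((S ∘L T) x) :=
          (Complex.re_le_norm _).trans (norm_inner_le_aNorm_mul_aNorm hA _ _)
      _ ≤ aNorm A x * (‖S ∘L T‖ * aNorm A x) := by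
          gcongr
          · exact aNorm_nonneg A x
          · exact (isASelfAdjoint_aAdjoint_comp hA hS).aNorm_apply_le hA x
      _ = ‖S ∘L T‖ * aNorm A x ^ 2 := by ring
  refine (pow_le_pow_iff_left₀ (aNorm_nonneg A _)
    (mul_nonneg (Real.sqrt_nonneg _) (aNorm_nonneg A x)) two_ne_zero).1 ?_
  rwa [mul_pow, Real.sq_sqrt (norm_nonneg _)]

lemma norm_inner_apply_le_of_aAdjoint (hA : A.IsPositive) (hS : A ∘L S = adjoint T ∘L A)
    {u v : H} (hu : aNorm A u ≤ 1) (hv : aNorm A v ≤ 1) : ‖⟪A (T u), v⟫_ℂ‖ ≤ √‖S ∘L T‖ :=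
  calc ‖⟪A (T u), v⟫_ℂ‖ ≤ √‖S ∘L T‖ * aNorm A u * aNorm A v :=
        (norm_inner_le_aNorm_mul_aNorm hA _ _).trans
          (mul_le_mul_of_nonneg_right (aNorm_apply_le_of_aAdjoint hA hS u) (aNorm_nonneg A v))
    _ ≤ √‖S ∘L T‖ := by
        rw [mul_assoc]
        exact mul_le_of_le_one_right (Real.sqrt_nonneg _)
          (mul_le_one₀ hu (aNorm_nonneg A v) hv)

end AAdjoint

section OperatorMatrix

def wBSet (A T1 T2 T3 T4 : H →L[ℂ] H) : Set ℝ :=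
  {r : ℝ | ∃ x y : H, Real.sqrt ((⟪A x, x⟫_ℂ).re + (⟪A y, y⟫_ℂ).re) = 1 ∧
    r = ‖⟪A (T1 x + T2 y), x⟫_ℂ + ⟪A (T3 x + T4 y), y⟫_ℂ‖}

variable {A T1 T2 T3 T4 : H →L[ℂ] H}

lemma wB_eq_sSup_wBSet : wB A T1 T2 T3 T4 = sSup (wBSet A T1 T2 T3 T4) := rfl

lemma aNorm_le_one_of_sqrt_eq_one (hA : A.IsPositive) {x y : H}
    (hxy : Real.sqrt ((⟪A x, x⟫_ℂ).re + (⟪A y, y⟫_ℂ).re) = 1) :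
    aNorm A x ≤ 1 ∧ aNorm A y ≤ 1 := by
  rw [re_inner_self_eq_aNorm_sq hA, re_inner_self_eq_aNorm_sq hA, Real.sqrt_eq_one] at hxy
  constructor <;> nlinarith [aNorm_nonneg A x, aNorm_nonneg A y]

lemma bddAbove_wBSet_of_aAdjoint (hA : A.IsPositive) {S1 S2 S3 S4 : H →L[ℂ] H}
    (hS1 : A ∘L S1 = adjoint T1 ∘L A) (hS2 : A ∘L S2 = adjoint T2 ∘L A)
    (hS3 : A ∘L S3 = adjoint T3 ∘L A) (hS4 : A ∘L S4 = adjoint T4 ∘L A) :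
    BddAbove (wBSet A T1 T2 T3 T4) := by
  refine ⟨√‖S1 ∘L T1‖ + √‖S2 ∘L T2‖ + √‖S3 ∘L T3‖ + √‖S4 ∘L T4‖, ?_⟩
  rintro _ ⟨x, y, hxy, rfl⟩
  obtain ⟨hx, hy⟩ := aNorm_le_one_of_sqrt_eq_one hA hxy
  have hsplit : ⟪A (T1 x + T2 y), x⟫_ℂ + ⟪A (T3 x + T4 y), y⟫_ℂ =
      ⟪A (T1 x), x⟫_ℂ + ⟪A (T2 y), x⟫_ℂ + ⟪A (T3 x), y⟫_ℂ + ⟪A (T4 y), y⟫_ℂ := by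
    simp only [map_add, inner_add_left]
    ring
  rw [hsplit]
  refine (norm_add₄_le).trans ?_
  gcongr
  · exact norm_inner_apply_le_of_aAdjoint hA hS1 hx hx
  · exact norm_inner_apply_le_of_aAdjoint hA hS2 hy hx
  · exact norm_inner_apply_le_of_aAdjoint hA hS3 hx hy
  · exact norm_inner_apply_le_of_aAdjoint hA hS4 hy hy

lemma wB_diag_le_of_bddAbove (hbdd : BddAbove (wBSet A T1 T2 T3 T4)) :
    wB A T1 0 0 T4 ≤ wB A T1 T2 T3 T4 := by
  rw [wB_eq_sSup_wBSet, wB_eq_sSup_wBSet]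
  refine Real.sSup_le ?_ (Real.sSup_nonneg ?_)
  · rintro _ ⟨x, y, hxy, rfl⟩
    have hplus := le_csSup hbdd ⟨x, y, hxy, rfl⟩
    have hminus := le_csSup hbdd ⟨x, -y, by simpa using hxy, rfl⟩
    have havg : ⟪A (T1 x + (0 : H →L[ℂ] H) y), x⟫_ℂ + ⟪A ((0 : H →L[ℂ] H) x + T4 y), y⟫_ℂ =
        ((⟪A (T1 x + T2 y), x⟫_ℂ + ⟪A (T3 x + T4 y), y⟫_ℂ) +
          (⟪A (T1 x + T2 (-y)), x⟫_ℂ + ⟪A (T3 x + T4 (-y)), -y⟫_ℂ)) / 2 := by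
      simp only [zero_apply, add_zero, zero_add, map_neg, map_add, inner_add_left,
        inner_neg_left, inner_neg_right]
      ring
    rw [havg, norm_div, Complex.norm_ofNat]
    linarith [norm_add_le (⟪A (T1 x + T2 y), x⟫_ℂ + ⟪A (T3 x + T4 y), y⟫_ℂ)
      (⟪A (T1 x + T2 (-y)), x⟫_ℂ + ⟪A (T3 x + T4 (-y)), -y⟫_ℂ)]
  · rintro _ ⟨x, y, -, rfl⟩
    exact norm_nonneg _

end OperatorMatrix

theorem stmt0 (A T1 T2 T3 T4 : H →L[ℂ] H) (hA : A.IsPositive)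
    (h1 : ∃ S : H →L[ℂ] H, A ∘L S = (ContinuousLinearMap.adjoint T1) ∘L A)
    (h2 : ∃ S : H →L[ℂ] H, A ∘L S = (ContinuousLinearMap.adjoint T2) ∘L A)
    (h3 : ∃ S : H →L[ℂ] H, A ∘L S = (ContinuousLinearMap.adjoint T3) ∘L A)
    (h4 : ∃ S : H →L[ℂ] H, A ∘L S = (ContinuousLinearMap.adjoint T4) ∘L A) :
    wB A T1 0 0 T4 ≤ wB A T1 T2 T3 T4 := by
  obtain ⟨S1, hS1⟩ := h1
  obtain ⟨S2, hS2⟩ := h2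
  obtain ⟨S3, hS3⟩ := h3
  obtain ⟨S4, hS4⟩ := h4
  exact wB_diag_le_of_bddAbove (bddAbove_wBSet_of_aAdjoint hA hS1 hS2 hS3 hS4)
end

section
/- Let A be strictly positive and let T1, T2 be bounded linear operators on H each admitting an A-adjoint (i.e. for each i there exists S_i with A∘S_i = T_i*∘A). Then w_B([[T2,-T1],[T1,T2]]) = max{w_A(T1 + iT2), w_A(T1 - iT2)}. -/
open scoped InnerProductSpace
open ContinuousLinearMap

variable {H : Type*} [NormedAddCommGroup H] [InnerProductSpace ℂ H] [CompleteSpace H]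

/-
Put `c = (1 + i) / 2`, so that `|c|² = 1/2`. The map `(x, y) ↦ (c (x + i y), c (x - i y))` is
a bijection of `H ⊕ H` preserving `‖·‖_B`, and it turns the quadratic form of
`[[T₂, -T₁], [T₁, T₂]]` into that of `diag (T₂ + i T₁, T₂ - i T₁)`. A diagonal operator matrix
has as `B`-numerical radius the larger `A`-numerical radius of its entries, and
`T₂ ± i T₁ = ± i (T₁ ∓ i T₂)`.

All suprema are finite because an operator `T` with an `A`-adjoint `S` is `A`-bounded:
`A (S T) = T* A T` is self-adjoint, and for `K` with `A K` self-adjoint, iterating Cauchy–Schwarz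
`|⟨A Kⁿ x, x⟩|² ≤ ⟨A x, x⟩ |⟨A K²ⁿ x, x⟩|` along `n = 2ᵏ` gives Reid's inequality
`|⟨A K x, x⟩| ≤ ‖K‖ ⟨A x, x⟩`.
-/

theorem IsSelfAdjoint.mul_pow_of_mul {R : Type*} [Monoid R] [StarMul R] {a k : R}
    (ha : IsSelfAdjoint a) (hak : IsSelfAdjoint (a * k)) (n : ℕ) : IsSelfAdjoint (a * k ^ n) := by
  induction n with
  | zero => simpa using ha
  | succ n ih =>
    have hka : star k * a = a * k := by rw [← hak.star_eq, star_mul, ha.star_eq]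
    rw [IsSelfAdjoint, pow_succ, ← mul_assoc, star_mul, ih.star_eq, ← mul_assoc, hka,
      mul_assoc, ← pow_succ', pow_succ, mul_assoc]

theorem le_of_sq_le_succ_of_le_pow_two_pow {a : ℕ → ℝ} {C r : ℝ} (hr : 0 ≤ r)
    (hsq : ∀ k, a k ^ 2 ≤ a (k + 1)) (hle : ∀ k, a k ≤ C * r ^ 2 ^ k) : a 0 ≤ r := by
  rcases le_or_gt (a 0) 0 with ha | ha
  · exact ha.trans hr
  have hpow : ∀ k, a 0 ^ 2 ^ k ≤ C * r ^ 2 ^ k := fun k => by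
    refine le_trans ?_ (hle k)
    induction k with
    | zero => simp
    | succ k ih =>
      calc a 0 ^ 2 ^ (k + 1) = (a 0 ^ 2 ^ k) ^ 2 := by rw [pow_succ, pow_mul]
        _ ≤ a k ^ 2 := by gcongr
        _ ≤ a (k + 1) := hsq k
  by_contra! hra
  have hr0 : 0 < r := by
    by_contra! hr0
    have := hpow 0
    simp [le_antisymm hr0 hr] at this
    linarith
  obtain ⟨n, hn⟩ := pow_unbounded_of_one_lt C ((one_lt_div hr0).mpr hra)
  have : (a 0 / r) ^ 2 ^ n ≤ C := by
    rw [div_pow, div_le_iff₀ (by positivity)]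
    exact hpow n
  exact hn.not_ge <| (pow_le_pow_right₀ ((one_lt_div hr0).mpr hra).le
    Nat.lt_two_pow_self.le).trans this

theorem ContinuousLinearMap.IsPositive.inner_eq_inner_sqrt {A : H →L[ℂ] H} (hA : A.IsPositive)
    (x y : H) : ⟪A x, y⟫_ℂ = ⟪CFC.sqrt A x, CFC.sqrt A y⟫_ℂ := by
  have hR : (CFC.sqrt A).IsPositive := (nonneg_iff_isPositive _).mp (CFC.sqrt_nonneg A)
  rw [← hR.inner_left_eq_inner_right, ← mul_apply_eq_comp,
    CFC.sqrt_mul_sqrt_self A ((nonneg_iff_isPositive A).mpr hA)]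

theorem ContinuousLinearMap.IsPositive.norm_inner_sq_le {A : H →L[ℂ] H} (hA : A.IsPositive)
    (x y : H) : ‖⟪A x, y⟫_ℂ‖ ^ 2 ≤ (⟪A x, x⟫_ℂ).re * (⟪A y, y⟫_ℂ).re := by
  simp only [hA.inner_eq_inner_sqrt, ← RCLike.re_to_complex, inner_self_eq_norm_sq, ← mul_pow]
  gcongr
  exact norm_inner_le_norm _ _

theorem ContinuousLinearMap.IsPositive.norm_inner_apply_le_of_isSelfAdjoint_mul {A K : H →L[ℂ] H}
    (hA : A.IsPositive) (hAK : IsSelfAdjoint (A * K)) (x : H) :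
    ‖⟪A (K x), x⟫_ℂ‖ ≤ ‖K‖ * (⟪A x, x⟫_ℂ).re := by
  set N := (⟪A x, x⟫_ℂ).re
  obtain hN | hN := (show 0 ≤ N from hA.re_inner_nonneg_left x).eq_or_lt
  · have hcs := hA.norm_inner_sq_le (K x) x
    change _ ≤ _ * N at hcs
    rw [← hN, mul_zero] at hcs ⊢
    simpa using hcs
  have hsymm : ∀ n u v, ⟪A ((K ^ n) u), v⟫_ℂ = ⟪A u, (K ^ n) v⟫_ℂ := fun n u v => by
    rw [hA.inner_left_eq_inner_right u]
    exact (hA.isSelfAdjoint.mul_pow_of_mul hAK n).isSymmetric u v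
  set a : ℕ → ℝ := fun k => ‖⟪A ((K ^ 2 ^ k) x), x⟫_ℂ‖ / N
  suffices ‖⟪A (K x), x⟫_ℂ‖ / N ≤ ‖K‖ by rwa [div_le_iff₀ hN] at this
  refine le_of_sq_le_succ_of_le_pow_two_pow (a := a) (C := ‖A‖ * ‖x‖ ^ 2 / N)
    (norm_nonneg K) (fun k => ?_) (fun k => ?_) |>.trans_eq' (by simp [a])
  · have hcs := hA.norm_inner_sq_le ((K ^ 2 ^ k) x) x
    have hsq : ⟪A ((K ^ 2 ^ k) x), (K ^ 2 ^ k) x⟫_ℂ = ⟪A ((K ^ 2 ^ (k + 1)) x), x⟫_ℂ := by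
      rw [← hsymm, pow_succ, pow_mul, sq, mul_apply_eq_comp]
    rw [hsq] at hcs
    simp only [a, div_pow]
    rw [div_le_div_iff₀ (by positivity) hN, sq N, ← mul_assoc]
    exact mul_le_mul_of_nonneg_right (hcs.trans (mul_le_mul_of_nonneg_right
      (Complex.re_le_norm _) hN.le)) hN.le
  · simp only [a]
    rw [div_mul_eq_mul_div]
    gcongr
    calc ‖⟪A ((K ^ 2 ^ k) x), x⟫_ℂ‖ ≤ ‖A‖ * (‖K‖ ^ 2 ^ k * ‖x‖) * ‖x‖ := by
          refine (norm_inner_le_norm _ _).trans ?_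
          gcongr
          refine (A.le_opNorm _).trans ?_
          gcongr
          exact ((K ^ 2 ^ k).le_opNorm x).trans
            (by gcongr; exact norm_pow_le' K (by positivity))
      _ = ‖A‖ * ‖x‖ ^ 2 * ‖K‖ ^ 2 ^ k := by ring

theorem ContinuousLinearMap.IsPositive.re_inner_apply_apply_le_of_comp_eq {A S T : H →L[ℂ] H}
    (hA : A.IsPositive) (hS : A ∘L S = adjoint T ∘L A) (x : H) :
    (⟪A (T x), T x⟫_ℂ).re ≤ ‖S ∘L T‖ * (⟪A x, x⟫_ℂ).re := by
  have hAST : A * (S ∘L T) = adjoint T ∘L A ∘L T := by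
    rw [mul_def, ← comp_assoc, hS, comp_assoc]
  have hsa : IsSelfAdjoint (A * (S ∘L T)) := hAST ▸ (hA.adjoint_conj T).isSelfAdjoint
  calc (⟪A (T x), T x⟫_ℂ).re = (⟪A ((S ∘L T) x), x⟫_ℂ).re := by
        rw [← adjoint_inner_left, ← comp_apply, ← hS, comp_apply, comp_apply]
    _ ≤ ‖⟪A ((S ∘L T) x), x⟫_ℂ‖ := Complex.re_le_norm _
    _ ≤ ‖S ∘L T‖ * (⟪A x, x⟫_ℂ).re := hA.norm_inner_apply_le_of_isSelfAdjoint_mul hsa x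

theorem ContinuousLinearMap.IsPositive.norm_inner_apply_le_of_comp_eq {A S T : H →L[ℂ] H}
    (hA : A.IsPositive) (hS : A ∘L S = adjoint T ∘L A) (x : H) :
    ‖⟪A (T x), x⟫_ℂ‖ ≤ √‖S ∘L T‖ * (⟪A x, x⟫_ℂ).re := by
  have hN : 0 ≤ (⟪A x, x⟫_ℂ).re := hA.re_inner_nonneg_left x
  refine (pow_le_pow_iff_left₀ (norm_nonneg _) (by positivity) two_ne_zero).mp ?_
  calc ‖⟪A (T x), x⟫_ℂ‖ ^ 2 ≤ (⟪A (T x), T x⟫_ℂ).re * (⟪A x, x⟫_ℂ).re := hA.norm_inner_sq_le _ _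
    _ ≤ ‖S ∘L T‖ * (⟪A x, x⟫_ℂ).re * (⟪A x, x⟫_ℂ).re := by
        gcongr; exact hA.re_inner_apply_apply_le_of_comp_eq hS x
    _ = (√‖S ∘L T‖ * (⟪A x, x⟫_ℂ).re) ^ 2 := by
        rw [mul_pow, Real.sq_sqrt (norm_nonneg _)]; ring

section

variable {E : Type*} [NormedAddCommGroup E] [InnerProductSpace ℂ E]

theorem norm_inner_add_smul_apply_le {A T T' : E →L[ℂ] E} {C C' : ℝ}
    (hT : ∀ x, ‖⟪A (T x), x⟫_ℂ‖ ≤ C * (⟪A x, x⟫_ℂ).re)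
    (hT' : ∀ x, ‖⟪A (T' x), x⟫_ℂ‖ ≤ C' * (⟪A x, x⟫_ℂ).re) (z : ℂ) (x : E) :
    ‖⟪A ((T + z • T') x), x⟫_ℂ‖ ≤ (C + ‖z‖ * C') * (⟪A x, x⟫_ℂ).re := by
  calc ‖⟪A ((T + z • T') x), x⟫_ℂ‖ ≤ ‖⟪A (T x), x⟫_ℂ‖ + ‖z‖ * ‖⟪A (T' x), x⟫_ℂ‖ := by
        rw [add_apply, smul_apply, map_add, map_smul, inner_add_left, inner_smul_left]
        refine (norm_add_le _ _).trans ?_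
        rw [norm_mul, RCLike.norm_conj]
    _ ≤ C * (⟪A x, x⟫_ℂ).re + ‖z‖ * (C' * (⟪A x, x⟫_ℂ).re) := by gcongr <;> simp [hT, hT']
    _ = (C + ‖z‖ * C') * (⟪A x, x⟫_ℂ).re := by ring

theorem ContinuousLinearMap.IsPositive.norm_inner_le_wA_mul {A T : E →L[ℂ] E} {C : ℝ}
    (hA : A.IsPositive) (hT : ∀ x, ‖⟪A (T x), x⟫_ℂ‖ ≤ C * (⟪A x, x⟫_ℂ).re) (u : E) :
    ‖⟪A (T u), u⟫_ℂ‖ ≤ wA A T * (⟪A u, u⟫_ℂ).re := by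
  set N := (⟪A u, u⟫_ℂ).re
  obtain hN | hN := (show 0 ≤ N from hA.re_inner_nonneg_left u).eq_or_lt
  · calc ‖⟪A (T u), u⟫_ℂ‖ ≤ C * N := hT u
      _ = wA A T * N := by rw [← hN, mul_zero, mul_zero]
  have hbdd : BddAbove {r : ℝ | ∃ x : E, aNorm A x = 1 ∧ r = ‖⟪A (T x), x⟫_ℂ‖} := by
    refine ⟨C, ?_⟩
    rintro r ⟨x, hx, rfl⟩
    simpa [Real.sqrt_eq_one.mp hx] using hT x
  set c : ℝ := (√N)⁻¹
  have hc : c ^ 2 = N⁻¹ := by rw [inv_pow, Real.sq_sqrt hN.le]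
  have hscale : ∀ M : E →L[ℂ] E, ⟪M ((c : ℂ) • u), (c : ℂ) • u⟫_ℂ = (c ^ 2 : ℝ) * ⟪M u, u⟫_ℂ :=
    fun M => by
      simp only [map_smul, inner_smul_left, inner_smul_right, Complex.conj_ofReal]
      push_cast; ring
  have hunit : aNorm A ((c : ℂ) • u) = 1 := by
    rw [aNorm, hscale, Complex.re_ofReal_mul, hc, inv_mul_cancel₀ hN.ne', Real.sqrt_one]
  have hle := le_csSup hbdd ⟨_, hunit, rfl⟩
  rw [← comp_apply, hscale, norm_mul, Complex.norm_real, Real.norm_of_nonneg (sq_nonneg c), hc,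
    comp_apply, inv_mul_le_iff₀ hN] at hle
  rwa [mul_comm] at hle

theorem wA_smul_of_norm_eq_one (A T : E →L[ℂ] E) {z : ℂ} (hz : ‖z‖ = 1) :
    wA A (z • T) = wA A T := by
  have hval : ∀ x : E, ‖⟪A ((z • T) x), x⟫_ℂ‖ = ‖⟪A (T x), x⟫_ℂ‖ := fun x => by
    rw [smul_apply, map_smul, inner_smul_left, norm_mul, RCLike.norm_conj, hz, one_mul]
  simp only [wA, hval]

-- Without the bounds the suprema could be junk: `sSup` of an unbounded set of reals is `0`.
theorem wB_diagonal {A P Q : E →L[ℂ] E} {C D : ℝ} (hA : A.IsPositive)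
    (hP : ∀ x, ‖⟪A (P x), x⟫_ℂ‖ ≤ C * (⟪A x, x⟫_ℂ).re)
    (hQ : ∀ x, ‖⟪A (Q x), x⟫_ℂ‖ ≤ D * (⟪A x, x⟫_ℂ).re) :
    wB A P 0 0 Q = max (wA A P) (wA A Q) := by
  have hwA_nonneg : ∀ T : E →L[ℂ] E, 0 ≤ wA A T := fun T =>
    Real.sSup_nonneg (by rintro _ ⟨x, -, rfl⟩; positivity)
  have hle : ∀ r ∈ {r : ℝ | ∃ x y : E, √((⟪A x, x⟫_ℂ).re + (⟪A y, y⟫_ℂ).re) = 1 ∧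
      r = ‖⟪A (P x + (0 : E →L[ℂ] E) y), x⟫_ℂ + ⟪A ((0 : E →L[ℂ] E) x + Q y), y⟫_ℂ‖},
      r ≤ max (wA A P) (wA A Q) := by
    rintro r ⟨x, y, hxy, rfl⟩
    have hx := hA.re_inner_nonneg_left x
    have hy := hA.re_inner_nonneg_left y
    rw [zero_apply, zero_apply, add_zero, zero_add]
    calc ‖⟪A (P x), x⟫_ℂ + ⟪A (Q y), y⟫_ℂ‖
        ≤ wA A P * (⟪A x, x⟫_ℂ).re + wA A Q * (⟪A y, y⟫_ℂ).re :=
          (norm_add_le _ _).trans (add_le_add (hA.norm_inner_le_wA_mul hP x)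
            (hA.norm_inner_le_wA_mul hQ y))
      _ ≤ max (wA A P) (wA A Q) * (⟪A x, x⟫_ℂ).re + max (wA A P) (wA A Q) * (⟪A y, y⟫_ℂ).re := by
          gcongr
          exacts [le_max_left _ _, le_max_right _ _]
      _ = max (wA A P) (wA A Q) := by rw [← mul_add, Real.sqrt_eq_one.mp hxy, mul_one]
  have hwB_nonneg : 0 ≤ wB A P 0 0 Q :=
    Real.sSup_nonneg (by rintro _ ⟨_, _, _, rfl⟩; positivity)
  refine le_antisymm (Real.sSup_le hle (le_max_of_le_left (hwA_nonneg P))) (max_le ?_ ?_)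
  · refine Real.sSup_le ?_ hwB_nonneg
    rintro _ ⟨x, hx, rfl⟩
    exact le_csSup ⟨_, hle⟩ ⟨x, 0, by simpa [aNorm] using hx, by simp⟩
  · refine Real.sSup_le ?_ hwB_nonneg
    rintro _ ⟨y, hy, rfl⟩
    exact le_csSup ⟨_, hle⟩ ⟨0, y, by simpa [aNorm] using hy, by simp⟩

theorem wB_eq_wB_diagonal (A T1 T2 : E →L[ℂ] E) :
    wB A T2 (-T1) T1 T2 = wB A (T2 + Complex.I • T1) 0 0 (T2 - Complex.I • T1) := by
  set c : ℂ := (1 + Complex.I) / 2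
  have hnorm : ∀ x y : E, (⟪A (c • (x + Complex.I • y)), c • (x + Complex.I • y)⟫_ℂ).re +
      (⟪A (c • (x - Complex.I • y)), c • (x - Complex.I • y)⟫_ℂ).re =
      (⟪A x, x⟫_ℂ).re + (⟪A y, y⟫_ℂ).re := fun x y => by
    rw [← Complex.add_re, ← Complex.add_re]
    congr 1
    simp only [c, map_add, map_sub, map_smul, inner_add_left, inner_add_right, inner_sub_left,
      inner_sub_right, inner_smul_left, inner_smul_right, map_div₀, map_one, Complex.conj_I,
      map_ofNat]
    ring_nf
    simp only [Complex.I_sq, Complex.I_pow_four]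
    ring
  have hval : ∀ x y : E,
      ⟪A ((T2 + Complex.I • T1) (c • (x + Complex.I • y))), c • (x + Complex.I • y)⟫_ℂ +
      ⟪A ((T2 - Complex.I • T1) (c • (x - Complex.I • y))), c • (x - Complex.I • y)⟫_ℂ =
      ⟪A (T2 x - T1 y), x⟫_ℂ + ⟪A (T1 x + T2 y), y⟫_ℂ := fun x y => by
    simp only [c, add_apply, sub_apply, smul_apply, map_add, map_sub, map_smul, inner_add_left,
      inner_add_right, inner_sub_left, inner_sub_right, inner_smul_left, inner_smul_right,
      map_div₀, map_one, Complex.conj_I, map_ofNat]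
    ring_nf
    simp only [Complex.I_sq, Complex.I_pow_four]
    ring
  have hsurj : ∀ u v : E, ∃ x y : E, c • (x + Complex.I • y) = u ∧ c • (x - Complex.I • y) = v :=
    fun u v => ⟨((1 - Complex.I) / 2) • (u + v), (-c) • (u - v), by
      constructor <;> match_scalars <;> simp [c, Complex.ext_iff] <;> norm_num⟩
  unfold wB
  simp only [zero_apply, add_zero, zero_add, neg_apply, ← sub_eq_add_neg]
  congr 1
  ext r
  constructor
  · rintro ⟨x, y, hxy, rfl⟩
    exact ⟨_, _, by rwa [hnorm], by rw [hval]⟩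
  · rintro ⟨u, v, huv, rfl⟩
    obtain ⟨x, y, rfl, rfl⟩ := hsurj u v
    exact ⟨x, y, by rwa [hnorm] at huv, by rw [hval]⟩

end

theorem stmt3_general (A T1 T2 : H →L[ℂ] H) (hA : A.IsPositive)
    (h1 : ∃ S : H →L[ℂ] H, A ∘L S = (ContinuousLinearMap.adjoint T1) ∘L A)
    (h2 : ∃ S : H →L[ℂ] H, A ∘L S = (ContinuousLinearMap.adjoint T2) ∘L A) :
    wB A T2 (-T1) T1 T2 =
      max (wA A (T1 + Complex.I • T2)) (wA A (T1 - Complex.I • T2)) := by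
  obtain ⟨S1, hS1⟩ := h1
  obtain ⟨S2, hS2⟩ := h2
  have hT1 := hA.norm_inner_apply_le_of_comp_eq hS1
  have hT2 := hA.norm_inner_apply_le_of_comp_eq hS2
  have hP := norm_inner_add_smul_apply_le hT2 hT1 Complex.I
  have hQ := norm_inner_add_smul_apply_le hT2 hT1 (-Complex.I)
  rw [neg_smul, ← sub_eq_add_neg] at hQ
  have hP_eq : T2 + Complex.I • T1 = Complex.I • (T1 - Complex.I • T2) := by
    rw [smul_sub, smul_smul, Complex.I_mul_I, neg_one_smul, sub_neg_eq_add, add_comm]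
  have hQ_eq : T2 - Complex.I • T1 = (-Complex.I) • (T1 + Complex.I • T2) := by
    rw [smul_add, smul_smul, neg_mul, Complex.I_mul_I, neg_neg, one_smul, neg_smul,
      neg_add_eq_sub]
  rw [wB_eq_wB_diagonal, wB_diagonal hA hP hQ, hP_eq, hQ_eq,
    wA_smul_of_norm_eq_one _ _ (by simp), wA_smul_of_norm_eq_one _ _ (by simp), max_comm]

theorem stmt3 (A T1 T2 : H →L[ℂ] H) (hA : A.IsPositive) (hA' : ∀ x : H, x ≠ 0 → 0 < (⟪A x, x⟫_ℂ).re)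
    (h1 : ∃ S : H →L[ℂ] H, A ∘L S = (ContinuousLinearMap.adjoint T1) ∘L A)
    (h2 : ∃ S : H →L[ℂ] H, A ∘L S = (ContinuousLinearMap.adjoint T2) ∘L A) :
    wB A T2 (-T1) T1 T2 =
      max (wA A (T1 + Complex.I • T2)) (wA A (T1 - Complex.I • T2)) :=
  stmt3_general A T1 T2 hA h1 h2
end

section
/- Let A be strictly positive and let T1, T2 be bounded linear operators on H each admitting an A-adjoint (i.e. for each i there exists S_i with A∘S_i = T_i*∘A). Then w_B([[iT2,-T1],[T1,iT2]]) = max{w_A(T1 - T2), w_A(T1 + T2)}. -/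
/-!
Write `A = B† B`, so that `⟨x, y⟩_A = ⟨B x, B y⟩` and `‖x‖_A = ‖B x‖`. The unitary change of
variables `x = (u + v)/√2`, `y = -i (u - v)/√2` on `H ⊕ H` preserves `‖·‖_B` and turns the
quadratic form of `[[iT₂, -T₁], [T₁, iT₂]]` into `-i (⟨A(T₁+T₂)u, u⟩ - ⟨A(T₁-T₂)v, v⟩)`.
Taking `v = 0` or `u = 0` gives the lower bound, and `|⟨APu, u⟩| ≤ w_A(P) ‖u‖_A²` the upper one.

Since `sSup` of an unbounded set of reals is `0`, the real content is that `w_A(T)` is finite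
when `T` has an `A`-adjoint `S`: then `R = S T` is `A`-symmetric, and Cauchy–Schwarz iterated
along `R, R², R⁴, …` gives `‖R x‖_A ≤ ‖R‖ ‖x‖_A`, hence `‖T x‖_A² ≤ ‖S T‖ ‖x‖_A²`.
-/

open scoped InnerProductSpace
open ContinuousLinearMap

variable {H : Type*} [NormedAddCommGroup H] [InnerProductSpace ℂ H] [CompleteSpace H]

open scoped InnerProduct

theorem le_of_forall_pow_two_pow_le_mul_s4 {a c K : ℝ} (hc : 0 ≤ c)
    (h : ∀ n : ℕ, a ^ 2 ^ n ≤ K * c ^ 2 ^ n) : a ≤ c := by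
  by_contra! hca
  rcases hc.eq_or_lt with rfl | hc
  · have := h 0
    simp only [pow_zero, pow_one, mul_zero] at this
    linarith
  have hq : 1 < a / c := (one_lt_div hc).mpr hca
  obtain ⟨n, hn⟩ := pow_unbounded_of_one_lt K hq
  have hle : (a / c) ^ 2 ^ n ≤ K := by
    rw [div_pow, div_le_iff₀ (by positivity)]
    exact h n
  linarith [pow_le_pow_right₀ hq.le (Nat.lt_two_pow_self (n := n)).le]

theorem Real.sSup_le_sSup_of_nonneg {s t : Set ℝ} (ht : BddAbove t) (h0 : ∀ x ∈ t, 0 ≤ x)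
    (hst : s ⊆ t) : sSup s ≤ sSup t :=
  Real.sSup_le (fun _ hx => le_csSup ht (hst hx)) (Real.sSup_nonneg h0)

section Seminorm

variable {𝕜 E F : Type*} [RCLike 𝕜] [NormedAddCommGroup E] [InnerProductSpace 𝕜 E]
  [NormedAddCommGroup F] [InnerProductSpace 𝕜 F] (B : E →L[𝕜] F)

theorem exists_eq_norm_smul_of_ne_zero {x : E} (hx : B x ≠ 0) :
    ∃ y, ‖B y‖ = 1 ∧ x = (‖B x‖ : 𝕜) • y := by
  have hpos : 0 < ‖B x‖ := norm_pos_iff.mpr hx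
  refine ⟨(‖B x‖⁻¹ : 𝕜) • x, ?_, ?_⟩
  · rw [map_smul, norm_smul, norm_inv, RCLike.norm_ofReal, abs_norm, inv_mul_cancel₀ hpos.ne']
  · rw [smul_smul, mul_inv_cancel₀ (by exact_mod_cast hpos.ne'), one_smul]

variable {B} {R : E →L[𝕜] E} (hR : ∀ x y, ⟪B (R x), B y⟫_𝕜 = ⟪B x, B (R y)⟫_𝕜)
include hR

theorem norm_apply_sq_le_of_symm (x : E) : ‖B (R x)‖ ^ 2 ≤ ‖B x‖ * ‖B (R (R x))‖ :=
  calc ‖B (R x)‖ ^ 2 = RCLike.re ⟪B x, B (R (R x))⟫_𝕜 := by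
        rw [← hR, inner_self_eq_norm_sq]
    _ ≤ ‖⟪B x, B (R (R x))⟫_𝕜‖ := RCLike.re_le_norm _
    _ ≤ ‖B x‖ * ‖B (R (R x))‖ := norm_inner_le_norm _ _

theorem inner_apply_pow_of_symm (n : ℕ) (x y : E) :
    ⟪B ((R ^ n) x), B y⟫_𝕜 = ⟪B x, B ((R ^ n) y)⟫_𝕜 := by
  induction n generalizing x y with
  | zero => rfl
  | succ n ih =>
    rw [pow_succ, mul_apply_eq_comp, ih, hR, ← mul_apply_eq_comp, ← pow_succ', pow_succ]

theorem norm_apply_pow_two_pow_le {x : E} (hx : ‖B x‖ = 1) (n : ℕ) :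
    ‖B (R x)‖ ^ 2 ^ n ≤ ‖B ((R ^ 2 ^ n) x)‖ := by
  induction n with
  | zero => simp
  | succ n ih =>
    calc ‖B (R x)‖ ^ 2 ^ (n + 1) = (‖B (R x)‖ ^ 2 ^ n) ^ 2 := by rw [pow_succ, pow_mul]
      _ ≤ ‖B ((R ^ 2 ^ n) x)‖ ^ 2 := by gcongr
      _ ≤ ‖B x‖ * ‖B ((R ^ 2 ^ n) ((R ^ 2 ^ n) x))‖ :=
        norm_apply_sq_le_of_symm (inner_apply_pow_of_symm hR _) x
      _ = ‖B ((R ^ 2 ^ (n + 1)) x)‖ := by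
        rw [hx, one_mul, ← mul_apply_eq_comp, ← pow_add, ← two_mul, ← pow_succ']

theorem norm_apply_le_of_symm (x : E) : ‖B (R x)‖ ≤ ‖R‖ * ‖B x‖ := by
  by_cases hx : B x = 0
  · have := norm_apply_sq_le_of_symm hR x
    rw [hx, norm_zero, zero_mul] at this
    rw [hx, norm_zero, mul_zero]
    exact ((sq_nonpos_iff _).mp this).le
  obtain ⟨y, hy, hxy⟩ := exists_eq_norm_smul_of_ne_zero B hx
  have hRy : ‖B (R y)‖ ≤ ‖R‖ := by
    refine le_of_forall_pow_two_pow_le_mul_s4 (K := ‖B‖ * ‖y‖) (norm_nonneg R) fun n => ?_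
    calc ‖B (R y)‖ ^ 2 ^ n ≤ ‖B ((R ^ 2 ^ n) y)‖ := norm_apply_pow_two_pow_le hR hy n
      _ ≤ ‖B‖ * (‖R ^ 2 ^ n‖ * ‖y‖) := B.le_opNorm_of_le ((R ^ 2 ^ n).le_opNorm y)
      _ ≤ ‖B‖ * (‖R‖ ^ 2 ^ n * ‖y‖) := by gcongr; exact norm_pow_le' R (by positivity)
      _ = ‖B‖ * ‖y‖ * ‖R‖ ^ 2 ^ n := by ring
  calc ‖B (R x)‖ = ‖B x‖ * ‖B (R y)‖ := by
        conv_lhs => rw [hxy, map_smul, map_smul, norm_smul, RCLike.norm_ofReal, abs_norm]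
    _ ≤ ‖R‖ * ‖B x‖ := by rw [mul_comm]; gcongr

end Seminorm

section AAdjoint

variable (B : H →L[ℂ] H)

theorem inner_adjoint_comp_self_apply (x y : H) : ⟪(B† ∘L B) x, y⟫_ℂ = ⟪B x, B y⟫_ℂ :=
  adjoint_inner_left B y (B x)

theorem re_inner_adjoint_comp_self_apply (x : H) : (⟪(B† ∘L B) x, x⟫_ℂ).re = ‖B x‖ ^ 2 := by
  rw [inner_adjoint_comp_self_apply]
  exact inner_self_eq_norm_sq (𝕜 := ℂ) (B x)

theorem aNorm_adjoint_comp_self (x : H) : aNorm (B† ∘L B) x = ‖B x‖ := by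
  rw [aNorm, re_inner_adjoint_comp_self_apply, Real.sqrt_sq (norm_nonneg _)]

variable {B} {S T : H →L[ℂ] H} (hS : (B† ∘L B) ∘L S = T† ∘L (B† ∘L B))
include hS

theorem inner_apply_comp_of_adjoint (x y : H) :
    ⟪B ((S ∘L T) x), B y⟫_ℂ = ⟪B (T x), B (T y)⟫_ℂ := by
  simpa only [comp_apply, adjoint_inner_left] using congrArg (fun F ↦ ⟪F (T x), y⟫_ℂ) hS

theorem norm_apply_sq_le_of_adjoint (x : H) : ‖B (T x)‖ ^ 2 ≤ ‖S ∘L T‖ * ‖B x‖ ^ 2 := by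
  have hsymm : ∀ x y, ⟪B ((S ∘L T) x), B y⟫_ℂ = ⟪B x, B ((S ∘L T) y)⟫_ℂ := fun x y ↦ by
    rw [inner_apply_comp_of_adjoint hS, ← inner_conj_symm (B x), inner_apply_comp_of_adjoint hS,
      inner_conj_symm]
  calc ‖B (T x)‖ ^ 2 = (⟪B x, B ((S ∘L T) x)⟫_ℂ).re := by
        rw [← hsymm, inner_apply_comp_of_adjoint hS]
        exact (inner_self_eq_norm_sq (𝕜 := ℂ) (B (T x))).symm
    _ ≤ ‖⟪B x, B ((S ∘L T) x)⟫_ℂ‖ := Complex.re_le_norm _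
    _ ≤ ‖B x‖ * (‖S ∘L T‖ * ‖B x‖) :=
        (norm_inner_le_norm _ _).trans (by gcongr; exact norm_apply_le_of_symm hsymm x)
    _ = ‖S ∘L T‖ * ‖B x‖ ^ 2 := by ring

theorem bddAbove_wA_set_of_adjoint :
    BddAbove {r : ℝ | ∃ x : H, aNorm (B† ∘L B) x = 1 ∧ r = ‖⟪(B† ∘L B) (T x), x⟫_ℂ‖} := by
  refine ⟨√‖S ∘L T‖, ?_⟩
  rintro _ ⟨x, hx, rfl⟩
  rw [aNorm_adjoint_comp_self] at hx
  calc ‖⟪(B† ∘L B) (T x), x⟫_ℂ‖ ≤ ‖B (T x)‖ * ‖B x‖ := by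
        rw [inner_adjoint_comp_self_apply]; exact norm_inner_le_norm _ _
    _ ≤ √‖S ∘L T‖ := by
        rw [hx, mul_one]
        exact Real.le_sqrt_of_sq_le (by simpa [hx] using norm_apply_sq_le_of_adjoint hS x)

end AAdjoint

theorem wA_nonneg {E : Type*} [NormedAddCommGroup E] [InnerProductSpace ℂ E] (A T : E →L[ℂ] E) :
    0 ≤ wA A T :=
  Real.sSup_nonneg (by rintro _ ⟨x, -, rfl⟩; exact norm_nonneg _)

theorem norm_inner_le_wA_mul {B T : H →L[ℂ] H}
    (hT : BddAbove {r : ℝ | ∃ x : H, aNorm (B† ∘L B) x = 1 ∧ r = ‖⟪(B† ∘L B) (T x), x⟫_ℂ‖})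
    (x : H) : ‖⟪(B† ∘L B) (T x), x⟫_ℂ‖ ≤ wA (B† ∘L B) T * ‖B x‖ ^ 2 := by
  by_cases hx : B x = 0
  · rw [inner_adjoint_comp_self_apply, hx, inner_zero_right, norm_zero]
    exact mul_nonneg (wA_nonneg _ _) (sq_nonneg _)
  obtain ⟨y, hy, hxy⟩ := exists_eq_norm_smul_of_ne_zero B hx
  have hwy : ‖⟪(B† ∘L B) (T y), y⟫_ℂ‖ ≤ wA (B† ∘L B) T :=
    le_csSup hT ⟨y, by rw [aNorm_adjoint_comp_self, hy], rfl⟩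
  calc ‖⟪(B† ∘L B) (T x), x⟫_ℂ‖ = ‖⟪(B† ∘L B) (T y), y⟫_ℂ‖ * ‖B x‖ ^ 2 := by
        conv_lhs => rw [hxy, map_smul, map_smul, inner_smul_left, inner_smul_right,
          RCLike.conj_ofReal, norm_mul, norm_mul, RCLike.norm_ofReal, abs_norm]
        ring
    _ ≤ wA (B† ∘L B) T * ‖B x‖ ^ 2 := by gcongr

section Rotation

variable {E : Type*} [NormedAddCommGroup E] [InnerProductSpace ℂ E] {c : ℝ} (hc : 2 * c ^ 2 = 1)
include hc

theorem exists_rotation_eq (x y : E) :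
    ∃ u v : E, x = (c : ℂ) • (u + v) ∧ y = (-Complex.I * c) • (u - v) := by
  have hc' : 2 * (c : ℂ) ^ 2 = 1 := by exact_mod_cast hc
  refine ⟨(c : ℂ) • (x + Complex.I • y), (c : ℂ) • (x - Complex.I • y), ?_, ?_⟩
  · match_scalars
    · linear_combination -hc'
    · ring
  · match_scalars
    · linear_combination -hc' + 2 * (c : ℂ) ^ 2 * Complex.I_sq
    · ring

theorem inner_rotation_add (A : E →L[ℂ] E) (u v : E) :
    ⟪A ((c : ℂ) • (u + v)), (c : ℂ) • (u + v)⟫_ℂ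
      + ⟪A ((-Complex.I * c) • (u - v)), (-Complex.I * c) • (u - v)⟫_ℂ
    = ⟪A u, u⟫_ℂ + ⟪A v, v⟫_ℂ := by
  have hc' : 2 * (c : ℂ) ^ 2 = 1 := by exact_mod_cast hc
  simp only [map_smul, map_add, map_sub, inner_smul_left, inner_smul_right,
    inner_add_left, inner_add_right, inner_sub_left, inner_sub_right,
    map_mul, map_neg, Complex.conj_I, Complex.conj_ofReal]
  linear_combination (⟪A u, u⟫_ℂ + ⟪A v, v⟫_ℂ) * hc' +
    (-(c : ℂ) ^ 2 * (⟪A u, u⟫_ℂ + ⟪A v, v⟫_ℂ - ⟪A u, v⟫_ℂ - ⟪A v, u⟫_ℂ)) * Complex.I_sq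

theorem inner_rotation_opMatrix (A T1 T2 : E →L[ℂ] E) (u v : E) :
    ⟪A ((Complex.I • T2) ((c : ℂ) • (u + v)) + (-T1) ((-Complex.I * c) • (u - v))),
        (c : ℂ) • (u + v)⟫_ℂ
      + ⟪A (T1 ((c : ℂ) • (u + v)) + (Complex.I • T2) ((-Complex.I * c) • (u - v))),
        (-Complex.I * c) • (u - v)⟫_ℂ
    = -Complex.I * (⟪A ((T1 + T2) u), u⟫_ℂ - ⟪A ((T1 - T2) v), v⟫_ℂ) := by
  have hc' : 2 * (c : ℂ) ^ 2 = 1 := by exact_mod_cast hc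
  simp only [smul_apply, neg_apply, add_apply, sub_apply, map_smul, map_add, map_sub, map_neg,
    inner_smul_left, inner_smul_right, inner_add_left, inner_add_right,
    inner_sub_left, inner_sub_right, inner_neg_left,
    map_mul, Complex.conj_I, Complex.conj_ofReal]
  linear_combination (-Complex.I * (⟪A (T1 u), u⟫_ℂ + ⟪A (T2 u), u⟫_ℂ
      - ⟪A (T1 v), v⟫_ℂ + ⟪A (T2 v), v⟫_ℂ)) * hc' +
    (Complex.I * (c : ℂ) ^ 2 * (⟪A (T2 u), u⟫_ℂ - ⟪A (T2 u), v⟫_ℂ - ⟪A (T2 v), u⟫_ℂ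
      + ⟪A (T2 v), v⟫_ℂ)) * Complex.I_sq

end Rotation

theorem wB_rotation_eq {E : Type*} [NormedAddCommGroup E] [InnerProductSpace ℂ E]
    (A T1 T2 : E →L[ℂ] E) :
    wB A (Complex.I • T2) (-T1) T1 (Complex.I • T2) =
      sSup {r : ℝ | ∃ u v : E, √((⟪A u, u⟫_ℂ).re + (⟪A v, v⟫_ℂ).re) = 1 ∧
        r = ‖⟪A ((T1 + T2) u), u⟫_ℂ - ⟪A ((T1 - T2) v), v⟫_ℂ‖} := by
  obtain ⟨c, hc⟩ : ∃ c : ℝ, 2 * c ^ 2 = 1 :=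
    ⟨(√2)⁻¹, by rw [inv_pow, Real.sq_sqrt zero_le_two, mul_inv_cancel₀ two_ne_zero]⟩
  have hnorm : ∀ u v : E, (⟪A ((c : ℂ) • (u + v)), (c : ℂ) • (u + v)⟫_ℂ).re
      + (⟪A ((-Complex.I * c) • (u - v)), (-Complex.I * c) • (u - v)⟫_ℂ).re
      = (⟪A u, u⟫_ℂ).re + (⟪A v, v⟫_ℂ).re := fun u v ↦ by
    rw [← Complex.add_re, ← Complex.add_re, inner_rotation_add hc]
  have hval : ∀ u v : E,
      ‖⟪A ((Complex.I • T2) ((c : ℂ) • (u + v)) + (-T1) ((-Complex.I * c) • (u - v))),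
        (c : ℂ) • (u + v)⟫_ℂ
      + ⟪A (T1 ((c : ℂ) • (u + v)) + (Complex.I • T2) ((-Complex.I * c) • (u - v))),
        (-Complex.I * c) • (u - v)⟫_ℂ‖
      = ‖⟪A ((T1 + T2) u), u⟫_ℂ - ⟪A ((T1 - T2) v), v⟫_ℂ‖ := fun u v ↦ by
    rw [inner_rotation_opMatrix hc, norm_mul, norm_neg, Complex.norm_I, one_mul]
  unfold wB
  congr 1
  ext r
  constructor
  · rintro ⟨x, y, hxy, rfl⟩
    obtain ⟨u, v, rfl, rfl⟩ := exists_rotation_eq hc x y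
    exact ⟨u, v, hnorm u v ▸ hxy, hval u v⟩
  · rintro ⟨u, v, huv, rfl⟩
    exact ⟨_, _, (hnorm u v).symm ▸ huv, (hval u v).symm⟩

theorem norm_inner_sub_inner_le_max_wA {B P M : H →L[ℂ] H}
    (hP : BddAbove {r : ℝ | ∃ x : H, aNorm (B† ∘L B) x = 1 ∧ r = ‖⟪(B† ∘L B) (P x), x⟫_ℂ‖})
    (hM : BddAbove {r : ℝ | ∃ x : H, aNorm (B† ∘L B) x = 1 ∧ r = ‖⟪(B† ∘L B) (M x), x⟫_ℂ‖})
    {u v : H} (huv : ‖B u‖ ^ 2 + ‖B v‖ ^ 2 = 1) :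
    ‖⟪(B† ∘L B) (P u), u⟫_ℂ - ⟪(B† ∘L B) (M v), v⟫_ℂ‖ ≤
      max (wA (B† ∘L B) M) (wA (B† ∘L B) P) :=
  calc _ ≤ wA (B† ∘L B) P * ‖B u‖ ^ 2 + wA (B† ∘L B) M * ‖B v‖ ^ 2 :=
        (norm_sub_le _ _).trans
          (add_le_add (norm_inner_le_wA_mul hP u) (norm_inner_le_wA_mul hM v))
    _ ≤ max (wA (B† ∘L B) M) (wA (B† ∘L B) P) * (‖B u‖ ^ 2 + ‖B v‖ ^ 2) := by
        rw [mul_add]; gcongr; exacts [le_max_right _ _, le_max_left _ _]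
    _ = max (wA (B† ∘L B) M) (wA (B† ∘L B) P) := by rw [huv, mul_one]

theorem stmt4_general (A T1 T2 : H →L[ℂ] H) (hA : A.IsPositive)
    (h1 : ∃ S : H →L[ℂ] H, A ∘L S = (ContinuousLinearMap.adjoint T1) ∘L A)
    (h2 : ∃ S : H →L[ℂ] H, A ∘L S = (ContinuousLinearMap.adjoint T2) ∘L A) :
    wB A (Complex.I • T2) (-T1) T1 (Complex.I • T2) =
      max (wA A (T1 - T2)) (wA A (T1 + T2)) := by
  obtain ⟨B, rfl⟩ : ∃ B : H →L[ℂ] H, A = B† ∘L B :=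
    CStarAlgebra.nonneg_iff_eq_star_mul_self.mp ((nonneg_iff_isPositive A).mpr hA)
  obtain ⟨S1, hS1⟩ := h1
  obtain ⟨S2, hS2⟩ := h2
  have hP := bddAbove_wA_set_of_adjoint (B := B) (S := S1 + S2) (T := T1 + T2)
    (by rw [comp_add, map_add, add_comp, hS1, hS2])
  have hM := bddAbove_wA_set_of_adjoint (B := B) (S := S1 - S2) (T := T1 - T2)
    (by rw [comp_sub, map_sub, sub_comp, hS1, hS2])
  set w := max (wA (B† ∘L B) (T1 - T2)) (wA (B† ∘L B) (T1 + T2))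
  rw [wB_rotation_eq]
  set U := {r : ℝ | ∃ u v : H, √((⟪(B† ∘L B) u, u⟫_ℂ).re + (⟪(B† ∘L B) v, v⟫_ℂ).re) = 1 ∧
    r = ‖⟪(B† ∘L B) ((T1 + T2) u), u⟫_ℂ - ⟪(B† ∘L B) ((T1 - T2) v), v⟫_ℂ‖}
  have hU0 : ∀ r ∈ U, 0 ≤ r := by rintro _ ⟨u, v, -, rfl⟩; exact norm_nonneg _
  have hUw : ∀ r ∈ U, r ≤ w := by
    rintro _ ⟨u, v, huv, rfl⟩
    rw [re_inner_adjoint_comp_self_apply, re_inner_adjoint_comp_self_apply,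
      Real.sqrt_eq_one] at huv
    exact norm_inner_sub_inner_le_max_wA hP hM huv
  refine le_antisymm (Real.sSup_le hUw (le_max_of_le_left (wA_nonneg _ _))) (max_le ?_ ?_)
  · refine Real.sSup_le_sSup_of_nonneg ⟨w, hUw⟩ hU0 ?_
    rintro _ ⟨v, hv, rfl⟩
    exact ⟨0, v, by simpa [aNorm] using hv, by rw [inner_zero_right, zero_sub, norm_neg]⟩
  · refine Real.sSup_le_sSup_of_nonneg ⟨w, hUw⟩ hU0 ?_
    rintro _ ⟨u, hu, rfl⟩
    exact ⟨u, 0, by simpa [aNorm] using hu, by rw [inner_zero_right, sub_zero]⟩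

theorem stmt4 (A T1 T2 : H →L[ℂ] H) (hA : A.IsPositive) (hA' : ∀ x : H, x ≠ 0 → 0 < (⟪A x, x⟫_ℂ).re)
    (h1 : ∃ S : H →L[ℂ] H, A ∘L S = (ContinuousLinearMap.adjoint T1) ∘L A)
    (h2 : ∃ S : H →L[ℂ] H, A ∘L S = (ContinuousLinearMap.adjoint T2) ∘L A) :
    wB A (Complex.I • T2) (-T1) T1 (Complex.I • T2) =
      max (wA A (T1 - T2)) (wA A (T1 + T2)) :=
  stmt4_general A T1 T2 hA h1 h2
end
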